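/- arXiv:1710.00658 — 2 statements merged into one kernel-verified Lean document; each statement's English description precedes it below -/
import Mathlib

section
/- For every odd n ≥ 3, the n-wheel graph is not a zero graph: every automorphism of the n-wheel induces an even permutation of its 2n edges. -/
open SimpleGraph

set_option linter.unusedSectionVars false
set_option linter.unusedVariables false

/-- The sign of the permutation induced on the edge set of `G` by an automorphism `σ`. -/
noncomputable def edgeSign {V : Type*} [Fintype V] [DecidableEq V]
    (G : SimpleGraph V) (σ : G ≃g G) : ℤˣ := by
  classical
  exact Equiv.Perm.sign (σ.mapEdgeSet : Equiv.Perm G.edgeSet)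

/-- A *zero graph*: some automorphism induces an odd permutation of the edge set. -/
def IsZeroGraph {V : Type*} [Fintype V] [DecidableEq V] (G : SimpleGraph V) : Prop :=
  ∃ σ : G ≃g G, edgeSign G σ = -1

/-- The `n`-wheel graph: an axis vertex `0` joined by a spoke to each of the rim
vertices `1, …, n`, which form a cycle of length `n`. -/
def wheelGraph (n : ℕ) : SimpleGraph (Fin (n + 1)) :=
  SimpleGraph.fromRel (fun u v =>
    u = 0 ∨ (u ≠ 0 ∧ v ≠ 0 ∧ (v : ℕ) = (u : ℕ) % n + 1))


section helpers
open Equiv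

lemma edgeSign_eq {V : Type*} [Fintype V] [DecidableEq V] (G : SimpleGraph V)
    [Fintype G.edgeSet] (σ : G ≃g G) :
    edgeSign G σ = Equiv.Perm.sign (σ.mapEdgeSet : Equiv.Perm G.edgeSet) := by
  unfold edgeSign
  congr!

lemma edgeSign_trans {V : Type*} [Fintype V] [DecidableEq V] (G : SimpleGraph V)
    (σ τ : G ≃g G) : edgeSign G (σ.trans τ) = edgeSign G σ * edgeSign G τ := by
  classical
  have h : Iso.mapEdgeSet (G := G) (G' := G) (σ.trans τ) = (Iso.mapEdgeSet σ).trans (Iso.mapEdgeSet τ) := by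
    ext e
    rcases e with ⟨e, he⟩
    induction e with
    | _ u v => rfl
  rw [edgeSign_eq, edgeSign_eq, edgeSign_eq, h, Equiv.Perm.sign_trans]
  exact mul_comm _ _



section
variable {n : ℕ} [NeZero n]

def ofRim (a : ZMod n) : Fin (n+1) := ⟨a.val + 1, by have := ZMod.val_lt a; omega⟩

lemma ofRim_ne_zero (a : ZMod n) : ofRim a ≠ 0 := by
  simp [ofRim, Fin.ext_iff]

lemma ofRim_injective : Function.Injective (ofRim (n := n)) := by
  intro a b h
  simp only [ofRim, Fin.mk.injEq, add_left_inj] at h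
  exact ZMod.val_injective n h


def toRim (v : Fin (n+1)) : ZMod n := ((v.val - 1 : ℕ) : ZMod n)

lemma toRim_ofRim (a : ZMod n) : toRim (ofRim a) = a := by
  simp only [toRim, ofRim, Nat.add_sub_cancel]
  exact ZMod.natCast_rightInverse a

lemma ofRim_toRim {v : Fin (n+1)} (h : v ≠ 0) : ofRim (toRim v) = v := by
  have h1 : 1 ≤ v.val := by
    rcases Nat.eq_zero_or_pos v.val with h'|h'
    · exact absurd (Fin.ext h') h
    · omega
  have h2 : v.val - 1 < n := by have := v.isLt; omega
  simp only [ofRim, toRim, Fin.ext_iff]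
  rw [ZMod.val_natCast_of_lt h2]
  omega

set_option linter.unusedSectionVars false in
lemma adj_zero {v : Fin (n+1)} (hv : v ≠ 0) : (wheelGraph n).Adj 0 v := by
  simp only [wheelGraph, fromRel_adj]
  exact ⟨fun h => hv h.symm, by tauto⟩

lemma wOne_ne_zero (hn : 3 ≤ n) : (1 : ZMod n) ≠ 0 := by
  have h1 : (1 : ZMod n).val = 1 := by rw [ZMod.val_one_eq_one_mod, Nat.mod_eq_of_lt (by omega)]
  intro h0; rw [h0, ZMod.val_zero] at h1; omega

lemma adj_ofRim_iff (hn : 3 ≤ n) (a b : ZMod n) :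
    (wheelGraph n).Adj (ofRim a) (ofRim b) ↔ (b = a + 1 ∨ a = b + 1) := by
  have h1 : ((1 : ZMod n)).val = 1 := by rw [ZMod.val_one_eq_one_mod, Nat.mod_eq_of_lt (by omega)]
  have hval : ∀ x y : ZMod n, ((ofRim y : Fin (n+1)) : ℕ) = ((ofRim x : Fin (n+1)) : ℕ) % n + 1
      ↔ y = x + 1 := by
    intro x y
    have hadd : (x + 1 : ZMod n).val = (x.val + 1) % n := by rw [ZMod.val_add, h1]
    constructor
    · intro h
      simp only [ofRim] at h
      exact ZMod.val_injective n (by rw [hadd]; omega)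
    · intro h
      subst h
      simp only [ofRim]
      omega
  have hne : ∀ x y : ZMod n, y = x + 1 → ofRim x ≠ ofRim y := by
    intro x y h he
    have hxy := ofRim_injective he
    exact wOne_ne_zero hn (by linear_combination -h - hxy)
  simp only [wheelGraph, fromRel_adj, ofRim_ne_zero, ne_eq, not_false_iff, true_and, false_or]
  rw [hval, hval]
  constructor
  · rintro ⟨-, h⟩; tauto
  · rintro (h | h)
    · exact ⟨hne a b h, by tauto⟩
    · exact ⟨fun he => hne b a h he.symm, by tauto⟩

end

section
variable {n : ℕ} [NeZero n]

lemma wTwo_ne_zero (hn : 3 ≤ n) : (2 : ZMod n) ≠ 0 := by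
  intro h
  have h' : ((2 : ℕ) : ZMod n) = 0 := by push_cast; exact h
  rw [ZMod.natCast_eq_zero_iff] at h'
  have := Nat.le_of_dvd (by norm_num) h'
  omega

def spoke (hn : 3 ≤ n) (a : ZMod n) : (wheelGraph n).edgeSet :=
  ⟨s(0, ofRim a), (wheelGraph n).mem_edgeSet.2 (adj_zero (ofRim_ne_zero a))⟩

def rimEdge (hn : 3 ≤ n) (a : ZMod n) : (wheelGraph n).edgeSet :=
  ⟨s(ofRim a, ofRim (a+1)), (wheelGraph n).mem_edgeSet.2 ((adj_ofRim_iff hn a (a+1)).2 (Or.inl rfl))⟩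

lemma phi_bijective (hn : 3 ≤ n) (hodd : Odd n) :
    Function.Bijective (Sum.elim (spoke hn) (rimEdge hn) :
      ZMod n ⊕ ZMod n → (wheelGraph n).edgeSet) := by
  have h2 : (2 : ZMod n) ≠ 0 := wTwo_ne_zero hn
  constructor
  · rintro (a | a) (b | b) h <;>
      simp only [Sum.elim_inl, Sum.elim_inr, spoke, rimEdge, Subtype.mk.injEq, Sym2.eq,
        Sym2.rel_iff', Prod.mk.injEq, Prod.swap_prod_mk] at h
    · rcases h with ⟨-, h⟩ | ⟨h, -⟩
      · exact congrArg Sum.inl (ofRim_injective h)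
      · exact absurd h.symm (ofRim_ne_zero b)
    · rcases h with ⟨h, -⟩ | ⟨h, -⟩
      · exact absurd h.symm (ofRim_ne_zero b)
      · exact absurd h.symm (ofRim_ne_zero (b+1))
    · rcases h with ⟨h, -⟩ | ⟨-, h⟩
      · exact absurd h (ofRim_ne_zero a)
      · exact absurd h (ofRim_ne_zero (a+1))
    · rcases h with ⟨h1, h2'⟩ | ⟨h1, h2'⟩
      · exact congrArg Sum.inr (ofRim_injective h1)
      · exfalso
        have ha := ofRim_injective h1
        have hb := ofRim_injective h2'
        exact h2 (by linear_combination hb - ha)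
  · rintro ⟨e, he⟩
    induction e with
    | _ u v =>
      rw [SimpleGraph.mem_edgeSet] at he
      by_cases hu : u = 0
      · subst hu
        refine ⟨Sum.inl (toRim v), ?_⟩
        simp only [Sum.elim_inl, spoke, Subtype.mk.injEq]
        rw [ofRim_toRim he.ne']
      · by_cases hv : v = 0
        · subst hv
          refine ⟨Sum.inl (toRim u), ?_⟩
          simp only [Sum.elim_inl, spoke, Subtype.mk.injEq]
          rw [ofRim_toRim hu, Sym2.eq_swap]
        · have hu' := ofRim_toRim (n := n) hu
          have hv' := ofRim_toRim (n := n) hv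
          rw [← hu', ← hv'] at he
          rcases (adj_ofRim_iff hn _ _).1 he with h | h
          · refine ⟨Sum.inr (toRim u), ?_⟩
            simp only [Sum.elim_inr, rimEdge, Subtype.mk.injEq]
            rw [hu', ← h, hv']
          · refine ⟨Sum.inr (toRim v), ?_⟩
            simp only [Sum.elim_inr, rimEdge, Subtype.mk.injEq]
            rw [hv', ← h, hu', Sym2.eq_swap]
end

section
variable {n : ℕ} [NeZero n]

lemma sign_addLeft_odd (hodd : Odd n) (d : ZMod n) :
    Equiv.Perm.sign (Equiv.addLeft d : Equiv.Perm (ZMod n)) = 1 := by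
  obtain ⟨m, hm⟩ := hodd
  set b : ZMod n := ((m + 1 : ℕ) : ZMod n) * d with hb
  have hbb : b + b = d := by
    have : ((m + 1 : ℕ) : ZMod n) * d + ((m + 1 : ℕ) : ZMod n) * d
        = ((2 * (m + 1) : ℕ) : ZMod n) * d := by push_cast; ring
    rw [hb, this]
    have h2 : (2 * (m + 1) : ℕ) = n + 1 := by omega
    rw [h2]
    push_cast
    rw [ZMod.natCast_self]
    ring
  rw [← hbb, Equiv.addLeft_add, map_mul, Int.units_mul_self]

lemma affine_of_cycle_perm (hn : 3 ≤ n) (hodd : Odd n) (q : Equiv.Perm (ZMod n))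
    (hq : ∀ a b : ZMod n, (b = a + 1 ∨ a = b + 1) ↔ (q b = q a + 1 ∨ q a = q b + 1)) :
    ∃ ε : ZMod n, (ε = 1 ∨ ε = -1) ∧ ∀ a : ZMod n, q a = ε * a + q 0 := by
  have h2 : (2 : ZMod n) ≠ 0 := wTwo_ne_zero hn
  have hstart := (hq 0 1).1 (Or.inl (by ring))
  have key : ∀ ε : ZMod n, (ε = 1 ∨ ε = -1) → q 1 = q 0 + ε →
      ∀ k : ℕ, q (k : ZMod n) = ε * k + q 0 := by
    intro ε hε h1 k
    induction k using Nat.twoStepInduction with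
    | zero => simp
    | one => simp only [Nat.cast_one]; rw [h1]; ring
    | more k ih0 ih1 =>
      have hadj := (hq ((k+1 : ℕ) : ZMod n) ((k+2 : ℕ) : ZMod n)).1
        (Or.inl (by push_cast; ring))
      have hne : q ((k+2 : ℕ) : ZMod n) ≠ q ((k : ℕ) : ZMod n) := by
        intro h
        have := q.injective h
        apply h2
        have : ((k:ZMod n) + 2 : ZMod n) = (k : ZMod n) := by push_cast at this; linear_combination this
        linear_combination this
      rcases hadj with h | h
      · rcases hε with rfl | rfl
        · rw [h, ih1]; push_cast; ring
        · exfalso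
          apply hne
          rw [h, ih1, ih0]
          push_cast; ring
      · rcases hε with rfl | rfl
        · exfalso
          apply hne
          have : q ((k+2:ℕ) : ZMod n) = q ((k+1:ℕ) : ZMod n) - 1 := by linear_combination -h
          rw [this, ih1, ih0]
          push_cast; ring
        · have : q ((k+2:ℕ) : ZMod n) = q ((k+1:ℕ) : ZMod n) - 1 := by linear_combination -h
          rw [this, ih1]
          push_cast; ring
  have conv : ∀ ε : ZMod n, (ε = 1 ∨ ε = -1) → q 1 = q 0 + ε →
      ∃ ε : ZMod n, (ε = 1 ∨ ε = -1) ∧ ∀ a : ZMod n, q a = ε * a + q 0 := by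
    intro ε hε h1
    refine ⟨ε, hε, fun a => ?_⟩
    have := key ε hε h1 a.val
    rwa [ZMod.natCast_rightInverse a] at this
  rcases hstart with h | h
  · exact conv 1 (Or.inl rfl) (by linear_combination h)
  · exact conv (-1) (Or.inr rfl) (by linear_combination -h)
end

section
variable {n : ℕ} [NeZero n]

lemma fixing_sign (hn : 3 ≤ n) (hodd : Odd n) (σ : wheelGraph n ≃g wheelGraph n)
    (h0 : σ 0 = 0) : edgeSign (wheelGraph n) σ = 1 := by
  classical
  rw [edgeSign_eq]
  have hσne : ∀ v : Fin (n+1), v ≠ 0 → σ v ≠ 0 := by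
    intro v hv h
    exact hv (σ.toEquiv.injective (by rw [← h0] at h; exact h))
  have hσne' : ∀ v : Fin (n+1), v ≠ 0 → σ.symm v ≠ 0 := by
    intro v hv h
    apply hv
    rw [← σ.apply_symm_apply v, h, h0]
  let q : Equiv.Perm (ZMod n) :=
    { toFun := fun a => toRim (σ (ofRim a))
      invFun := fun a => toRim (σ.symm (ofRim a))
      left_inv := by
        intro a
        show toRim (σ.symm (ofRim (toRim (σ (ofRim a))))) = a
        rw [ofRim_toRim (hσne _ (ofRim_ne_zero a)), σ.symm_apply_apply, toRim_ofRim]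
      right_inv := by
        intro a
        show toRim (σ (ofRim (toRim (σ.symm (ofRim a))))) = a
        rw [ofRim_toRim (hσne' _ (ofRim_ne_zero a)), σ.apply_symm_apply, toRim_ofRim] }
  have hofq : ∀ a : ZMod n, ofRim (q a) = σ (ofRim a) := fun a =>
    ofRim_toRim (hσne _ (ofRim_ne_zero a))
  have hq : ∀ a b : ZMod n, (b = a + 1 ∨ a = b + 1) ↔ (q b = q a + 1 ∨ q a = q b + 1) := by
    intro a b
    rw [← adj_ofRim_iff hn a b, ← adj_ofRim_iff hn (q a) (q b), hofq, hofq]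
    exact σ.map_rel_iff.symm
  obtain ⟨ε, hε, hform⟩ := affine_of_cycle_perm hn hodd q hq
  set c := q 0 with hc
  set φ : ZMod n ⊕ ZMod n → (wheelGraph n).edgeSet := Sum.elim (spoke hn) (rimEdge hn) with hφ
  have hbij := phi_bijective hn hodd
  set E : (ZMod n ⊕ ZMod n) ≃ (wheelGraph n).edgeSet := Equiv.ofBijective φ hbij with hE
  have hEapp : ∀ z, E z = φ z := fun z => rfl
  have hmap : ∀ (e : (wheelGraph n).edgeSet) (u v : Fin (n+1)),
      (e : Sym2 (Fin (n+1))) = s(u,v) →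
      ((σ.mapEdgeSet e : (wheelGraph n).edgeSet) : Sym2 (Fin (n+1))) = s(σ u, σ v) := by
    intro e u v h
    have : ((σ.mapEdgeSet e : (wheelGraph n).edgeSet) : Sym2 (Fin (n+1)))
        = Sym2.map σ (e : Sym2 (Fin (n+1))) := rfl
    rw [this, h, Sym2.map_pair_eq]
  rcases hε with rfl | rfl
  · -- rotation case
    have hsign := Equiv.Perm.sign_eq_sign_of_equiv
      (Equiv.sumCongr (Equiv.addLeft c) (Equiv.addLeft c) :
        Equiv.Perm (ZMod n ⊕ ZMod n)) (σ.mapEdgeSet : Equiv.Perm (wheelGraph n).edgeSet) E ?_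
    · rw [← hsign, Equiv.Perm.sign_sumCongr, sign_addLeft_odd hodd, mul_one]
    · rintro (a | a)
      · apply Subtype.ext
        simp only [Equiv.sumCongr_apply, Sum.map_inl, hEapp, hφ, Sum.elim_inl]
        rw [show ((spoke hn (Equiv.addLeft c a) : (wheelGraph n).edgeSet) : Sym2 (Fin (n+1)))
          = s(0, ofRim (c + a)) from rfl]
        rw [hmap (spoke hn a) 0 (ofRim a) rfl, h0, ← hofq]
        have : q a = c + a := by rw [hform]; ring
        rw [this]
      · apply Subtype.ext
        simp only [Equiv.sumCongr_apply, Sum.map_inr, hEapp, hφ, Sum.elim_inr]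
        rw [show ((rimEdge hn (Equiv.addLeft c a) : (wheelGraph n).edgeSet) : Sym2 (Fin (n+1)))
          = s(ofRim (c + a), ofRim (c + a + 1)) from rfl]
        rw [hmap (rimEdge hn a) (ofRim a) (ofRim (a+1)) rfl, ← hofq, ← hofq]
        have h1 : q a = c + a := by rw [hform]; ring
        have h2 : q (a + 1) = c + a + 1 := by rw [hform]; ring
        rw [h1, h2]
  · -- reflection case
    have hsign := Equiv.Perm.sign_eq_sign_of_equiv
      (Equiv.sumCongr ((Equiv.neg (ZMod n)).trans (Equiv.addLeft c))
        ((Equiv.neg (ZMod n)).trans (Equiv.addLeft (c - 1))) :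
        Equiv.Perm (ZMod n ⊕ ZMod n)) (σ.mapEdgeSet : Equiv.Perm (wheelGraph n).edgeSet) E ?_
    · rw [← hsign, Equiv.Perm.sign_sumCongr, Equiv.Perm.sign_trans, Equiv.Perm.sign_trans,
        sign_addLeft_odd hodd, sign_addLeft_odd hodd, one_mul, Int.units_mul_self]
    · rintro (a | a)
      · apply Subtype.ext
        simp only [Equiv.sumCongr_apply, Sum.map_inl, hEapp, hφ, Sum.elim_inl]
        rw [show ((spoke hn ((Equiv.neg (ZMod n)).trans (Equiv.addLeft c) a) :
            (wheelGraph n).edgeSet) : Sym2 (Fin (n+1))) = s(0, ofRim (c + -a)) from rfl]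
        rw [hmap (spoke hn a) 0 (ofRim a) rfl, h0, ← hofq]
        have : q a = c + -a := by rw [hform]; ring
        rw [this]
      · apply Subtype.ext
        simp only [Equiv.sumCongr_apply, Sum.map_inr, hEapp, hφ, Sum.elim_inr]
        rw [show ((rimEdge hn ((Equiv.neg (ZMod n)).trans (Equiv.addLeft (c-1)) a) :
            (wheelGraph n).edgeSet) : Sym2 (Fin (n+1)))
          = s(ofRim (c - 1 + -a), ofRim (c - 1 + -a + 1)) from rfl]
        rw [hmap (rimEdge hn a) (ofRim a) (ofRim (a+1)) rfl, ← hofq, ← hofq]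
        have h1 : q a = c - 1 + -a + 1 := by rw [hform]; ring
        have h2 : q (a + 1) = c - 1 + -a := by rw [hform]; ring
        rw [h1, h2, Sym2.eq_swap]
end

section
variable {n : ℕ} [NeZero n]

lemma sigma_fixes_zero (hn : 4 ≤ n) (σ : wheelGraph n ≃g wheelGraph n) : σ 0 = 0 := by
  have hn3 : 3 ≤ n := by omega
  have h3 : (3 : ZMod n) ≠ 0 := by
    intro h
    have h' : ((3 : ℕ) : ZMod n) = 0 := by push_cast; exact h
    rw [ZMod.natCast_eq_zero_iff] at h'
    have := Nat.le_of_dvd (by norm_num) h'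
    omega
  by_contra h0
  have hdom : ∀ w : Fin (n+1), w ≠ σ 0 → (wheelGraph n).Adj (σ 0) w := by
    intro w hw
    have hsw : σ.symm w ≠ 0 := by
      intro h
      apply hw
      rw [← σ.apply_symm_apply w, h]
    have : (wheelGraph n).Adj (σ 0) (σ (σ.symm w)) := σ.map_rel_iff.2 (adj_zero hsw)
    rwa [σ.apply_symm_apply] at this
  set a := toRim (σ 0) with ha'
  have ha : ofRim a = σ 0 := ofRim_toRim h0
  have hne : ofRim (a + 2) ≠ σ 0 := by
    rw [← ha]
    intro h
    exact wTwo_ne_zero hn3 (by linear_combination (ofRim_injective h))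
  have hadj := hdom _ hne
  rw [← ha] at hadj
  rcases (adj_ofRim_iff hn3 a (a+2)).1 hadj with h | h
  · exact wOne_ne_zero hn3 (by linear_combination h)
  · exact h3 (by linear_combination -h)
end

section
-- the case n = 3

lemma wheel3_top : wheelGraph 3 = ⊤ := by
  ext u v
  simp only [wheelGraph, fromRel_adj, top_adj]
  constructor
  · tauto
  · intro h; refine ⟨h, ?_⟩; revert h; revert u v; decide

lemma adj3 (u v : Fin 4) : (wheelGraph 3).Adj u v ↔ u ≠ v := by
  rw [wheel3_top]
  simp

instance : DecidableRel (wheelGraph 3).Adj := fun u v => decidable_of_iff _ (adj3 u v).symm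

def swapIso (v : Fin 4) : wheelGraph 3 ≃g wheelGraph 3 :=
  { toEquiv := Equiv.swap 0 v
    map_rel_iff' := by
      intro a b
      rw [adj3, adj3]
      exact (Equiv.swap 0 v).injective.ne_iff }

lemma edgeSign_swapIso (v : Fin 4) : edgeSign (wheelGraph 3) (swapIso v) = 1 := by
  rw [edgeSign_eq]
  fin_cases v <;> decide
end

end helpers

open Equiv in
/-- For every odd `n ≥ 3`, the `n`-wheel graph is not a zero graph: every automorphism
induces an even permutation of its `2n` edges. -/
theorem oddWheel_not_isZeroGraph (n : ℕ) (hn : 3 ≤ n) (hodd : Odd n) :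
    (∀ σ : wheelGraph n ≃g wheelGraph n, edgeSign (wheelGraph n) σ = 1) ∧
    ¬ IsZeroGraph (wheelGraph n) := by

  haveI : NeZero n := ⟨by omega⟩
  have main : ∀ σ : wheelGraph n ≃g wheelGraph n, edgeSign (wheelGraph n) σ = 1 := by
    intro σ
    rcases Nat.lt_or_ge n 4 with h4 | h4
    · have h3 : n = 3 := by omega
      subst h3
      by_cases h0 : σ 0 = 0
      · exact fixing_sign hn hodd σ h0
      · have hσ' : (σ.trans (swapIso (σ 0))) 0 = 0 := by
          show Equiv.swap 0 (σ 0) (σ 0) = 0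
          rw [Equiv.swap_apply_right]
        have := fixing_sign hn hodd (σ.trans (swapIso (σ 0))) hσ'
        rw [edgeSign_trans, edgeSign_swapIso, mul_one] at this
        exact this
    · exact fixing_sign hn hodd σ (sigma_fixes_zero h4 σ)
  refine ⟨main, ?_⟩
  rintro ⟨σ, hσ⟩
  rw [main σ] at hσ
  exact absurd hσ (by decide)
end

section
/- There is no simple graph on 5 vertices with 8 edges in which every vertex has degree at least 3 and which is not a zero graph; equivalently, every simple graph on 5 vertices, 8 edges with minimum degree ≥ 3 admits an automorphism inducing an odd permutation of its edge set. -/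
open SimpleGraph

/-!
Since `8 = (5 choose 2) - 2`, the complement of `G` has two edges, and minimum degree `≥ 3` in `G`
means maximum degree `≤ 1` in `Gᶜ`, so these two edges are disjoint. Hence `G` is isomorphic to
`K₅` minus the edges `01` and `23`. In that graph the transposition `(0 1)` is an automorphism
which swaps the edges `0w` and `1w` for `w = 2, 3, 4` and fixes the edges `24` and `34`, so it acts
as an odd permutation on the edges; and being a zero graph is invariant under isomorphism.
-/

namespace SimpleGraph

variable {V : Type*} [Fintype V]

theorem edgeSign_eq_sign [DecidableEq V] (G : SimpleGraph V) [Fintype G.edgeSet] (σ : G ≃g G) :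
    edgeSign G σ = Equiv.Perm.sign (σ.mapEdgeSet : Equiv.Perm G.edgeSet) := by
  unfold edgeSign
  congr!

theorem edgeSign_conj [DecidableEq V] {G H : SimpleGraph V} (e : H ≃g G) (σ : H ≃g H) :
    edgeSign G ((e.symm.trans σ).trans e) = edgeSign H σ := by
  classical
  rw [edgeSign_eq_sign, edgeSign_eq_sign]
  refine Equiv.Perm.sign_eq_sign_of_equiv _ _ e.mapEdgeSet.symm fun x => ?_
  apply Subtype.ext
  simp [Iso.mapEdgeSet, Hom.mapEdgeSet, Sym2.map_map]

theorem IsZeroGraph.of_iso [DecidableEq V] {G H : SimpleGraph V} (e : H ≃g G)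
    (h : IsZeroGraph H) : IsZeroGraph G :=
  let ⟨σ, hσ⟩ := h
  ⟨(e.symm.trans σ).trans e, (edgeSign_conj e σ).trans hσ⟩

theorem card_edgeFinset_add_card_edgeFinset_compl [DecidableEq V] (G : SimpleGraph V)
    [DecidableRel G.Adj] :
    G.edgeFinset.card + Gᶜ.edgeFinset.card = (Fintype.card V).choose 2 := by
  rw [← Finset.card_union_of_disjoint (disjoint_edgeFinset.2 disjoint_compl_right),
    ← edgeFinset_sup, ← card_edgeFinset_top_eq_card_choose_two]
  congr! 2
  exact sup_compl_eq_top

theorem eq_of_mem_edgeSet_of_degree_le_one {H : SimpleGraph V} [DecidableRel H.Adj] {v : V}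
    (hv : H.degree v ≤ 1) {e e' : Sym2 V} (he : e ∈ H.edgeSet) (he' : e' ∈ H.edgeSet)
    (hve : v ∈ e) (hve' : v ∈ e') : e = e' := by
  obtain ⟨x, rfl⟩ := Sym2.mem_iff_exists.1 hve
  obtain ⟨y, rfl⟩ := Sym2.mem_iff_exists.1 hve'
  rw [Finset.card_le_one.1 hv x (by simpa using he) y (by simpa using he')]

theorem exists_embedding_edgeSet_eq_pair [DecidableEq V] {H : SimpleGraph V}
    [DecidableRel H.Adj] (hcard : H.edgeFinset.card = 2) (hdeg : ∀ v, H.degree v ≤ 1) :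
    ∃ f : Fin 4 ↪ V, H.edgeSet = {s(f 0, f 1), s(f 2, f 3)} := by
  obtain ⟨e, e', hne, hE⟩ := Finset.card_eq_two.1 hcard
  induction e using Sym2.ind with | _ a b => ?_
  induction e' using Sym2.ind with | _ c d => ?_
  have hE : H.edgeSet = {s(a, b), s(c, d)} := by
    rw [← coe_edgeFinset, hE, Finset.coe_pair]
  have hab : a ≠ b := (H.mem_edgeSet.1 (hE ▸ Or.inl rfl : s(a, b) ∈ H.edgeSet)).ne
  have hcd : c ≠ d := (H.mem_edgeSet.1 (hE ▸ Or.inr rfl : s(c, d) ∈ H.edgeSet)).ne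
  have hdisj : ∀ v ∈ s(a, b), v ∉ s(c, d) := fun v hv hv' =>
    hne (eq_of_mem_edgeSet_of_degree_le_one (hdeg v) (by simp [hE]) (by simp [hE]) hv hv')
  have hac : a ≠ c := fun h => hdisj a (by simp) (by simp [h])
  have had : a ≠ d := fun h => hdisj a (by simp) (by simp [h])
  have hbc : b ≠ c := fun h => hdisj b (by simp) (by simp [h])
  have hbd : b ≠ d := fun h => hdisj b (by simp) (by simp [h])
  refine ⟨⟨![a, b, c, d], fun i j hij => ?_⟩, hE⟩
  fin_cases i <;> fin_cases j <;> simp_all [eq_comm]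

omit [Fintype V] in
theorem comap_compl_fromEdgeSet {W : Type*} (f : W ≃ V) (s : Set (Sym2 V)) :
    (fromEdgeSet s)ᶜ.comap f = (fromEdgeSet (Sym2.map f ⁻¹' s))ᶜ := by
  ext u w
  simp [f.injective.ne_iff]

def k5MinusTwoEdges : SimpleGraph (Fin 5) := (fromEdgeSet {s(0, 1), s(2, 3)})ᶜ

instance : DecidableRel k5MinusTwoEdges.Adj :=
  inferInstanceAs (DecidableRel (fromEdgeSet {s(0, 1), s(2, 3)})ᶜ.Adj)

theorem isZeroGraph_k5MinusTwoEdges : IsZeroGraph k5MinusTwoEdges :=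
  ⟨⟨Equiv.swap 0 1, fun {u w} => by revert u w; decide⟩, by rw [edgeSign_eq_sign]; decide⟩

end SimpleGraph

/-- Every simple graph on `5` vertices with `8` edges and minimum degree `≥ 3`
is a zero graph: it has an automorphism inducing an odd permutation of its edges. -/
theorem five_vertices_eight_edges_isZeroGraph
    (G : SimpleGraph (Fin 5)) [DecidableRel G.Adj]
    (hE : G.edgeFinset.card = 8) (hdeg : ∀ v, 3 ≤ G.degree v) :
    IsZeroGraph G := by
  have hcard : Gᶜ.edgeFinset.card = 2 := by
    have := G.card_edgeFinset_add_card_edgeFinset_compl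
    rw [Fintype.card_fin, Nat.choose_two_right] at this
    omega
  have hdeg' : ∀ v, Gᶜ.degree v ≤ 1 := fun v => by
    have := hdeg v
    rw [degree_compl, Fintype.card_fin]
    omega
  obtain ⟨f, hf⟩ := exists_embedding_edgeSet_eq_pair hcard hdeg'
  obtain ⟨ρ, hρ⟩ := Equiv.Perm.exists_extending_pair (Fin.castSucc : Fin 4 → Fin 5) f
    (Fin.castSucc_injective 4) f.injective
  have hpair : ({s(f 0, f 1), s(f 2, f 3)} : Set (Sym2 (Fin 5))) =
      Sym2.map ρ '' {s(0, 1), s(2, 3)} := by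
    simp [Set.image_insert_eq, ← hρ]
  have hG : G.comap ρ = k5MinusTwoEdges := by
    rw [← compl_compl G, ← fromEdgeSet_edgeSet Gᶜ, hf, hpair, comap_compl_fromEdgeSet,
      Set.preimage_image_eq _ (Sym2.map.injective ρ.injective), k5MinusTwoEdges]
  exact (hG ▸ isZeroGraph_k5MinusTwoEdges).of_iso (Iso.comap ρ G)
end
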